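/- Let G be a finite simple graph and v a vertex with exactly two neighbors u_1, u_2 which are nonadjacent. Suppose there exist vertices u'_1 ∈ N(u_1) \ N(u_2) and u'_2 ∈ N(u_2) \ N(u_1) with u'_1, u'_2 ≠ v. Then γ(G) < θ(G). -/

import Mathlib

/-!
Take a minimum clique partition `P` and let `C` be the clique containing `v`; it lies in
`{v, u₁, u₂}` and, as `u₁ ≁ u₂`, misses one of them, say `u₂`. The nonadjacent vertices `u₂` and
`u₁'` lie outside `C` in distinct cliques, and together they dominate `C`. Choosing one vertex from
every clique other than `C`, with `u₂` and `u₁'` chosen in their own cliques, gives a dominating set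
with fewer than `|P|` vertices.
-/

open SimpleGraph

variable {V : Type*}

/-- `D` is a dominating set of `G`: every vertex not in `D` has a neighbor in `D`. -/
def IsDomSet (G : SimpleGraph V) (D : Finset V) : Prop :=
  ∀ v : V, v ∉ D → ∃ u ∈ D, G.Adj u v

/-- The domination number `γ(G)`. -/
noncomputable def domNum [Fintype V] (G : SimpleGraph V) : ℕ :=
  sInf {n | ∃ D : Finset V, IsDomSet G D ∧ D.card = n}

/-- `P` is a partition of the vertex set of `G` into cliques. -/
def IsCliquePartition (G : SimpleGraph V) (P : Finset (Finset V)) : Prop :=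
  (∀ C ∈ P, G.IsClique (C : Set V)) ∧ ∀ v : V, ∃! C : Finset V, C ∈ P ∧ v ∈ C

/-- The clique covering number `θ(G)`. -/
noncomputable def cliqueCoverNum [Fintype V] (G : SimpleGraph V) : ℕ :=
  sInf {n | ∃ P : Finset (Finset V), IsCliquePartition G P ∧ P.card = n}

lemma domNum_le_card [Fintype V] {G : SimpleGraph V} {D : Finset V} (hD : IsDomSet G D) :
    domNum G ≤ D.card :=
  Nat.sInf_le ⟨D, hD, rfl⟩

lemma isCliquePartition_singletons [Fintype V] [DecidableEq V] (G : SimpleGraph V) :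
    IsCliquePartition G (Finset.univ.image singleton) := by
  refine ⟨?_, fun w => ⟨{w}, by simp, ?_⟩⟩
  · intro C hC
    obtain ⟨a, -, rfl⟩ := Finset.mem_image.1 hC
    simp
  · rintro C ⟨hC, hwC⟩
    obtain ⟨a, -, rfl⟩ := Finset.mem_image.1 hC
    simp_all

lemma exists_isCliquePartition_card_eq_cliqueCoverNum [Fintype V] (G : SimpleGraph V) :
    ∃ P : Finset (Finset V), IsCliquePartition G P ∧ P.card = cliqueCoverNum G := by
  classical
  exact Nat.sInf_mem (s := {n | ∃ P : Finset (Finset V), IsCliquePartition G P ∧ P.card = n})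
    ⟨_, _, isCliquePartition_singletons G, rfl⟩

namespace IsCliquePartition

variable {G : SimpleGraph V} {P : Finset (Finset V)} {C : Finset V}

lemma exists_mem (hP : IsCliquePartition G P) (w : V) : ∃ C ∈ P, w ∈ C :=
  (hP.2 w).exists

lemma adj_of_mem (hP : IsCliquePartition G P) (hC : C ∈ P) {a b : V} (ha : a ∈ C) (hb : b ∈ C)
    (hab : a ≠ b) : G.Adj a b :=
  hP.1 C hC ha hb hab

lemma isDomSet_image_erase [DecidableEq V] (hP : IsCliquePartition G P) (f : Finset V → V)
    (hf : ∀ C' ∈ P, ∀ w ∈ C', f C' ∈ C')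
    (hdom : ∀ w ∈ C, ∃ u ∈ (P.erase C).image f, G.Adj u w) :
    IsDomSet G ((P.erase C).image f) := by
  intro w hw
  obtain ⟨C', hC', hwC'⟩ := hP.exists_mem w
  by_cases hC'C : C' = C
  · exact hdom w (hC'C ▸ hwC')
  · have hfD : f C' ∈ (P.erase C).image f :=
      Finset.mem_image_of_mem f (Finset.mem_erase.2 ⟨hC'C, hC'⟩)
    exact ⟨f C', hfD, hP.adj_of_mem hC' (hf C' hC' w hwC') hwC' fun h => hw (h ▸ hfD)⟩

lemma exists_isDomSet_card_lt (hP : IsCliquePartition G P) (hC : C ∈ P) {x y : V}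
    (hx : x ∉ C) (hy : y ∉ C) (hxy : ¬ G.Adj x y) (hdom : ∀ w ∈ C, G.Adj x w ∨ G.Adj y w) :
    ∃ D : Finset V, IsDomSet G D ∧ D.card < P.card := by
  classical
  let f : Finset V → V := fun C' =>
    if x ∈ C' then x else if y ∈ C' then y else if h : C'.Nonempty then h.choose else x
  have hf : ∀ C' ∈ P, ∀ w ∈ C', f C' ∈ C' := by
    intro C' _ w hw
    simp only [f]
    split_ifs with hx' hy' hne
    exacts [hx', hy', hne.choose_spec, absurd ⟨w, hw⟩ hne]
  obtain ⟨Cx, hCx, hxCx⟩ := hP.exists_mem x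
  obtain ⟨Cy, hCy, hyCy⟩ := hP.exists_mem y
  have hfx : f Cx = x := if_pos hxCx
  -- `x` can share a clique with `y` only if `x = y`.
  have hfy : f Cy = y := by
    by_cases hxCy : x ∈ Cy
    · by_contra hne
      exact hxy (hP.adj_of_mem hCy hxCy hyCy fun h => hne ((if_pos hxCy).trans h))
    · simp [f, hxCy, hyCy]
  have hmem : ∀ {C' u}, C' ∈ P → u ∈ C' → u ∉ C → f C' = u → u ∈ (P.erase C).image f :=
    fun hC' huC' hu hfu => Finset.mem_image.2
      ⟨_, Finset.mem_erase.2 ⟨fun h => hu (h ▸ huC'), hC'⟩, hfu⟩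
  refine ⟨(P.erase C).image f, hP.isDomSet_image_erase f hf fun w hw => ?_, ?_⟩
  · rcases hdom w hw with hxw | hyw
    exacts [⟨x, hmem hCx hxCx hx hfx, hxw⟩, ⟨y, hmem hCy hyCy hy hfy, hyw⟩]
  · exact Finset.card_image_le.trans_lt (Finset.card_erase_lt_of_mem hC)

lemma exists_isDomSet_card_lt_of_neighborSet_eq_pair (hP : IsCliquePartition G P) (hC : C ∈ P)
    {v u₁ u₂ u₁' : V} (hvC : v ∈ C) (hN : G.neighborSet v = {u₁, u₂}) (hu₂ : u₂ ∉ C)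
    (h1 : G.Adj u₁ u₁') (h1' : ¬ G.Adj u₂ u₁') (h1v : u₁' ≠ v) :
    ∃ D : Finset V, IsDomSet G D ∧ D.card < P.card := by
  have hsub : ∀ w ∈ C, w = v ∨ w = u₁ ∨ w = u₂ := fun w hw =>
    (eq_or_ne w v).imp_right fun hwv => by
      have hw' : w ∈ G.neighborSet v := hP.adj_of_mem hC hvC hw hwv.symm
      simpa [hN] using hw'
  have hu₁' : u₁' ∉ C := fun h => by
    rcases hsub u₁' h with rfl | rfl | rfl
    exacts [h1v rfl, G.irrefl h1, hu₂ h]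
  refine hP.exists_isDomSet_card_lt hC hu₂ hu₁' h1' fun w hw => ?_
  rcases hsub w hw with rfl | rfl | rfl
  · exact Or.inl (G.adj_symm (show u₂ ∈ G.neighborSet w by simp [hN]))
  · exact Or.inr h1.symm
  · exact absurd hw hu₂

end IsCliquePartition

theorem stmt_8_general [Fintype V] (G : SimpleGraph V)
    (v u₁ u₂ u₁' u₂' : V)
    (hN : G.neighborSet v = {u₁, u₂}) (h12 : ¬ G.Adj u₁ u₂)
    (h1 : G.Adj u₁ u₁') (h1' : ¬ G.Adj u₂ u₁') (h1v : u₁' ≠ v)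
    (h2 : G.Adj u₂ u₂') (h2' : ¬ G.Adj u₁ u₂') (h2v : u₂' ≠ v) :
    domNum G < cliqueCoverNum G := by
  obtain ⟨P, hP, hPcard⟩ := exists_isCliquePartition_card_eq_cliqueCoverNum G
  obtain ⟨C, hC, hvC⟩ := hP.exists_mem v
  obtain ⟨D, hD, hDP⟩ : ∃ D : Finset V, IsDomSet G D ∧ D.card < P.card := by
    by_cases hu₂ : u₂ ∈ C
    · have hu₁ : u₁ ∉ C := fun hu₁ =>
        h12 (hP.adj_of_mem hC hu₁ hu₂ fun h => h1' (h ▸ h1))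
      exact hP.exists_isDomSet_card_lt_of_neighborSet_eq_pair hC hvC
        (hN.trans (Set.pair_comm u₁ u₂)) hu₁ h2 h2' h2v
    · exact hP.exists_isDomSet_card_lt_of_neighborSet_eq_pair hC hvC hN hu₂ h1 h1' h1v
  exact hPcard ▸ (domNum_le_card hD).trans_lt hDP

/-- Let `v` have exactly two neighbors `u₁, u₂`, which are nonadjacent, and suppose
there are `u₁' ∈ N(u₁) \ N(u₂)` and `u₂' ∈ N(u₂) \ N(u₁)`, both different from `v`.
Then `γ(G) < θ(G)`. -/
theorem stmt_8 [Fintype V] (G : SimpleGraph V)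
    (v u₁ u₂ u₁' u₂' : V) (hne : u₁ ≠ u₂)
    (hN : G.neighborSet v = {u₁, u₂}) (h12 : ¬ G.Adj u₁ u₂)
    (h1 : G.Adj u₁ u₁') (h1' : ¬ G.Adj u₂ u₁') (h1v : u₁' ≠ v)
    (h2 : G.Adj u₂ u₂') (h2' : ¬ G.Adj u₁ u₂') (h2v : u₂' ≠ v) :
    domNum G < cliqueCoverNum G :=
  stmt_8_general G v u₁ u₂ u₁' u₂' hN h12 h1 h1' h1v h2 h2' h2v
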